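/- Let W be a finite-dimensional real vector space and A_W a nonzero algebraic curvature tensor on W such that (W, A_W) is indecomposable (there is no direct sum decomposition W = W₁ ⊕ W₂ with both W₁ and W₂ nonzero such that A_W(a,b,c,d) = 0 unless all four arguments lie in W₁ or all four lie in W₂). Define 𝔐 = (V,⟨·,·⟩,A) with V := W ⊕ W*, ⟨(w₁,ξ₁),(w₂,ξ₂)⟩ := ξ₁(w₂) + ξ₂(w₁), and A((w₁,ξ₁),(w₂,ξ₂),(w₃,ξ₃),(w₄,ξ₄)) := A_W(w₁,w₂,w₃,w₄). Then 𝔐 is indecomposable: there exist no nonzero subspaces V₁, V₂ of V with V = V₁ ⊕ V₂, ⟨v₁,v₂⟩ = 0 for all v₁ ∈ V₁, v₂ ∈ V₂, and A(a,b,c,d) = 0 unless all four arguments lie in V₁ or all four lie in V₂. -/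

import Mathlib

noncomputable section

/-- The Jacobi operator `J(x) : y ↦ 𝒜(y,x)x` of a (tri)linear curvature operator `𝒜`. -/
def jacobiOp {V : Type*} [AddCommGroup V] [Module ℝ V]
    (Aop : V →ₗ[ℝ] V →ₗ[ℝ] V →ₗ[ℝ] V) (x : V) : V →ₗ[ℝ] V where
  toFun y := Aop y x x
  map_add' y z := by simp
  map_smul' c y := by simp

/-- The polarized Jacobi operator `J(x,y) : z ↦ ½(𝒜(z,x)y + 𝒜(z,y)x)`. -/
def jacobiPol {V : Type*} [AddCommGroup V] [Module ℝ V]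
    (Aop : V →ₗ[ℝ] V →ₗ[ℝ] V →ₗ[ℝ] V) (x y : V) : V →ₗ[ℝ] V where
  toFun z := (1/2 : ℝ) • (Aop z x y + Aop z y x)
  map_add' a b := by simp [smul_add]; abel
  map_smul' c a := by simp [smul_add, smul_comm c]

/-!
Let `Sᵢ = {w | (w, 0) ∈ Vᵢ}`. Restricted to `W × 0`, the splitting of `𝔐` shows that `A_W`
splits along the disjoint subspaces `S₁`, `S₂`; enlarging one of them by a complement of
`S₁ ⊔ S₂` gives a genuine decomposition of `W`, so indecomposability and `A_W ≠ 0` force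
`S₁ = W`, say. Then every `(w, ξ) ∈ V₂` is orthogonal to all of `W × 0`, i.e. `ξ = 0`, and
`(w, 0) ∈ V₁ ∩ V₂` gives `V₂ = 0`.
-/

namespace LinearMap

variable {K W M : Type*} [Field K] [AddCommGroup W] [Module K W] [AddCommGroup M] [Module K M]

def SplitsAlong (A : W →ₗ[K] W →ₗ[K] W →ₗ[K] W →ₗ[K] M) (W₁ W₂ : Submodule K W) : Prop :=
  ∀ a b c d : W, A a b c d ≠ 0 →
    (a ∈ W₁ ∧ b ∈ W₁ ∧ c ∈ W₁ ∧ d ∈ W₁) ∨ (a ∈ W₂ ∧ b ∈ W₂ ∧ c ∈ W₂ ∧ d ∈ W₂)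

def IsIndecomposable (A : W →ₗ[K] W →ₗ[K] W →ₗ[K] W →ₗ[K] M) : Prop :=
  ¬ ∃ W₁ W₂ : Submodule K W, W₁ ≠ ⊥ ∧ W₂ ≠ ⊥ ∧ IsCompl W₁ W₂ ∧ A.SplitsAlong W₁ W₂

variable {A : W →ₗ[K] W →ₗ[K] W →ₗ[K] W →ₗ[K] M} {W₁ W₂ T₁ T₂ : Submodule K W}

theorem SplitsAlong.symm (h : A.SplitsAlong W₁ W₂) : A.SplitsAlong W₂ W₁ :=
  fun a b c d hA => (h a b c d hA).symm

theorem SplitsAlong.mono (h : A.SplitsAlong W₁ W₂) (h₁ : W₁ ≤ T₁) (h₂ : W₂ ≤ T₂) :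
    A.SplitsAlong T₁ T₂ := fun a b c d hA =>
  (h a b c d hA).imp (fun ⟨ha, hb, hc, hd⟩ => ⟨h₁ ha, h₁ hb, h₁ hc, h₁ hd⟩)
    (fun ⟨ha, hb, hc, hd⟩ => ⟨h₂ ha, h₂ hb, h₂ hc, h₂ hd⟩)

theorem eq_zero_of_splitsAlong_bot (h : A.SplitsAlong ⊥ ⊥) : A = 0 := by
  ext a b c d
  by_contra hA
  have ha : a = 0 := by
    rcases h a b c d hA with ⟨ha, -⟩ | ⟨ha, -⟩ <;> exact (Submodule.mem_bot K).1 ha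
  simp [ha] at hA

theorem IsIndecomposable.eq_bot_or_eq_bot (hA : A.IsIndecomposable) (hc : IsCompl W₁ W₂)
    (h : A.SplitsAlong W₁ W₂) : W₁ = ⊥ ∨ W₂ = ⊥ := by
  by_contra! hne
  exact hA ⟨W₁, W₂, hne.1, hne.2, hc, h⟩

theorem IsIndecomposable.eq_bot_or_eq_top (hA : A.IsIndecomposable) (hdisj : Disjoint W₁ W₂)
    (h : A.SplitsAlong W₁ W₂) : W₁ = ⊥ ∨ W₁ = ⊤ := by
  obtain ⟨D, hD⟩ := Submodule.exists_isCompl (W₁ ⊔ W₂)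
  have hc : IsCompl W₁ (W₂ ⊔ D) :=
    ⟨hdisj.disjoint_sup_right_of_disjoint_sup_left hD.disjoint, by
      rw [codisjoint_iff, ← sup_assoc]; exact hD.codisjoint.eq_top⟩
  exact (hA.eq_bot_or_eq_bot hc (h.mono le_rfl le_sup_left)).imp_right
    fun hbot : W₂ ⊔ D = ⊥ => eq_top_of_isCompl_bot (hbot ▸ hc)

theorem IsIndecomposable.eq_top_or_eq_top (hA : A.IsIndecomposable) (hA0 : A ≠ 0)
    (hdisj : Disjoint W₁ W₂) (h : A.SplitsAlong W₁ W₂) : W₁ = ⊤ ∨ W₂ = ⊤ := by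
  rcases hA.eq_bot_or_eq_top hdisj h with h₁ | h₁
  · rcases hA.eq_bot_or_eq_top hdisj.symm h.symm with h₂ | h₂
    · subst h₁ h₂
      exact absurd (eq_zero_of_splitsAlong_bot h) hA0
    · exact Or.inr h₂
  · exact Or.inl h₁

end LinearMap

section Product

open LinearMap Module

variable {K W X M : Type*} [Field K] [AddCommGroup W] [Module K W] [AddCommGroup X] [Module K X]
  [AddCommGroup M] [Module K M] {V₁ V₂ : Submodule K (W × X)}

theorem splitsAlong_comap_inl {A : W →ₗ[K] W →ₗ[K] W →ₗ[K] W →ₗ[K] M}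
    (h : ∀ a b c d : W × X, A a.1 b.1 c.1 d.1 ≠ 0 →
      (a ∈ V₁ ∧ b ∈ V₁ ∧ c ∈ V₁ ∧ d ∈ V₁) ∨ (a ∈ V₂ ∧ b ∈ V₂ ∧ c ∈ V₂ ∧ d ∈ V₂)) :
    A.SplitsAlong (V₁.comap (inl K W X)) (V₂.comap (inl K W X)) :=
  fun a b c d hA => h (a, 0) (b, 0) (c, 0) (d, 0) hA

theorem disjoint_comap_inl (h : Disjoint V₁ V₂) :
    Disjoint (V₁.comap (inl K W X)) (V₂.comap (inl K W X)) := by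
  rw [disjoint_iff, ← Submodule.comap_inf, h.eq_bot, Submodule.comap_bot, Submodule.ker_inl]

theorem eq_bot_of_comap_inl_eq_top {V₁ V₂ : Submodule K (W × Dual K W)} (hdisj : Disjoint V₁ V₂)
    (horth : ∀ v₁ ∈ V₁, ∀ v₂ ∈ V₂, v₁.2 v₂.1 + v₂.2 v₁.1 = 0)
    (htop : V₁.comap (inl K W (Dual K W)) = ⊤) : V₂ = ⊥ := by
  have hW (w : W) : (w, 0) ∈ V₁ := htop.ge Submodule.mem_top
  rw [eq_bot_iff]
  rintro ⟨w, ξ⟩ hv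
  have hξ : ξ = 0 := LinearMap.ext fun u => by simpa using horth (u, 0) (hW u) (w, ξ) hv
  subst hξ
  exact Submodule.disjoint_def.1 hdisj _ (hW w) hv

end Product

theorem dual_extension_indecomposable
    {W : Type*} [AddCommGroup W] [Module ℝ W]
    -- a nonzero algebraic curvature tensor A_W on W
    (AW : W →ₗ[ℝ] W →ₗ[ℝ] W →ₗ[ℝ] W →ₗ[ℝ] ℝ)
    (hAWne : AW ≠ 0)
    -- (W, A_W) is indecomposable
    (hWind : ¬ ∃ W₁ W₂ : Submodule ℝ W, W₁ ≠ ⊥ ∧ W₂ ≠ ⊥ ∧ IsCompl W₁ W₂ ∧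
      (∀ a b c d : W, AW a b c d ≠ 0 →
        (a ∈ W₁ ∧ b ∈ W₁ ∧ c ∈ W₁ ∧ d ∈ W₁) ∨ (a ∈ W₂ ∧ b ∈ W₂ ∧ c ∈ W₂ ∧ d ∈ W₂))) :
    -- 𝔐 is indecomposable
    ¬ ∃ V₁ V₂ : Submodule ℝ (W × Module.Dual ℝ W), V₁ ≠ ⊥ ∧ V₂ ≠ ⊥ ∧ IsCompl V₁ V₂ ∧
      (∀ v₁ ∈ V₁, ∀ v₂ ∈ V₂, v₁.2 v₂.1 + v₂.2 v₁.1 = 0) ∧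
      (∀ a b c d : W × Module.Dual ℝ W, AW a.1 b.1 c.1 d.1 ≠ 0 →
        (a ∈ V₁ ∧ b ∈ V₁ ∧ c ∈ V₁ ∧ d ∈ V₁) ∨ (a ∈ V₂ ∧ b ∈ V₂ ∧ c ∈ V₂ ∧ d ∈ V₂)) := by
  rintro ⟨V₁, V₂, h₁, h₂, hcompl, horth, hA⟩
  have hind : AW.IsIndecomposable := hWind
  rcases hind.eq_top_or_eq_top hAWne (disjoint_comap_inl hcompl.disjoint)
      (splitsAlong_comap_inl hA) with htop | htop
  · exact h₂ (eq_bot_of_comap_inl_eq_top hcompl.disjoint horth htop)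
  · refine h₁ (eq_bot_of_comap_inl_eq_top hcompl.disjoint.symm ?_ htop)
    exact fun v₂ hv₂ v₁ hv₁ => (add_comm _ _).trans (horth v₁ hv₁ v₂ hv₂)
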